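/- arXiv:math/0507056 — 4 statements merged into one kernel-verified Lean document; each statement's English description precedes it below -/
import Mathlib

section
/- For type B_n, the set of linear forms Ξ_ι = { φ_{j;k}(x_{j;1}) : j ≥ 1, 0 ≤ k ≤ 2n−1 } is closed under the action of all operators S_{m;l}: applying any S_{m;l} to φ_{j;k}(x_{j;1}) yields either φ_{j;k−1}(x_{j;1}), φ_{j;k+1}(x_{j;1}), or φ_{j;k}(x_{j;1}) itself. -/
open scoped Classical

noncomputable section

/-- position (j;i) ↦ (j-1)*n + i in the singly-indexed lattice. -/
def pos (n j i : ℕ) : ℕ := (j - 1) * n + i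

/-- the cyclic sequence ι = (…, n, …, 2, 1, n, …, 2, 1): position k ≥ 1 carries index ((k-1) % n)+1. -/
def iotaSeq (n k : ℕ) : ℕ := (k - 1) % n + 1

variable {I : Type*}

/-- σ_k(x) = x_k + Σ_{j>k} ⟨h_{i_k}, α_{i_j}⟩ x_j. -/
def sigmaPL (a : I → I → ℤ) (ι : ℕ → I) (x : ℕ → ℤ) (k : ℕ) : ℤ :=
  x k + ∑' j : ℕ, if k < j then a (ι k) (ι j) * x j else 0
/-- k^{(+)}: the next position after k carrying the same index. -/
def kplus (ι : ℕ → I) (k : ℕ) : ℕ := sInf {l | k < l ∧ ι l = ι k}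

/-- k^{(-)}: the previous position (≥ 1) carrying the same index, 0 if none. -/
def kminus (ι : ℕ → I) (k : ℕ) : ℕ := sSup {l | 0 < l ∧ l < k ∧ ι l = ι k}

/-- coefficient vector of the linear form β_k = x_k + Σ_{k<j<k^{(+)}} ⟨h_{i_k},α_{i_j}⟩ x_j + x_{k^{(+)}},
with β_0 = 0. -/
def betaF (a : I → I → ℤ) (ι : ℕ → I) (k : ℕ) : ℕ → ℚ := fun j =>
  if k = 0 then 0 else
    (if j = k then 1 else 0)
    + (if k < j ∧ j < kplus ι k then (a (ι k) (ι j) : ℚ) else 0)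
    + (if j = kplus ι k then 1 else 0)

/-- the piecewise-linear operator S_k on linear forms (coefficient vectors). -/
def Sop (a : I → I → ℤ) (ι : ℕ → I) (k : ℕ) (φ : ℕ → ℚ) : ℕ → ℚ :=
  if 0 < φ k then φ - φ k • betaF a ι k else φ - φ k • betaF a ι (kminus ι k)

/-- evaluation of a linear form at a point of ℤ^∞. -/
def evalF (φ : ℕ → ℚ) (x : ℕ → ℤ) : ℚ := ∑' l : ℕ, φ l * (x l : ℚ)

/-- the coordinate linear form x_m. -/
def coordF (m : ℕ) : ℕ → ℚ := fun l => if l = m then 1 else 0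

/-- the coordinate linear form x_{j;i}, with the convention x_{j;0} = x_{j;n+1} = 0. -/
def cX (n j i : ℕ) : ℕ → ℚ :=
  if 1 ≤ j ∧ 1 ≤ i ∧ i ≤ n then coordF (pos n j i) else 0
/-- Cartan matrix of type B_n: a_{n-1,n} = -2, a_{n,n-1} = -1. -/
def aB (n : ℕ) (i j : ℕ) : ℤ :=
  if i = j then 2
  else if i + 1 = j then (if j = n then -2 else -1)
  else if j + 1 = i then -1
  else 0

/-- Cartan matrix of type C_n: a_{n-1,n} = -1, a_{n,n-1} = -2. -/
def aC (n : ℕ) (i j : ℕ) : ℤ :=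
  if i = j then 2
  else if i + 1 = j then -1
  else if j + 1 = i then (if i = n then -2 else -1)
  else 0

/-- Cartan matrix of type D_n. -/
def aD (n : ℕ) (i j : ℕ) : ℤ :=
  if i = j then 2
  else if (i + 1 = j ∧ j + 1 ≤ n) ∨ (j + 1 = i ∧ i + 1 ≤ n)
        ∨ (i + 2 = j ∧ j = n) ∨ (j + 2 = i ∧ i = n) then -1
  else 0

/-- Cartan matrix of type F_4: a_{23} = -2, a_{32} = -1. -/
def aF4 (i j : ℕ) : ℤ :=
  if i = j then 2
  else if i = 2 ∧ j = 3 then -2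
  else if i + 1 = j ∨ j + 1 = i then -1
  else 0
/-- φ_{j;k} for types B_n and C_n:
φ_{j;0} = id, φ_{j;k} = S_{j;k}⋯S_{j;1} (1 ≤ k ≤ n-1),
φ_{j;k} = S_{j+k-n;2n-k}⋯S_{j;n} φ_{j;n-1} (n ≤ k ≤ 2n-1). -/
def phiBC (a : ℕ → ℕ → ℤ) (n j : ℕ) : ℕ → (ℕ → ℚ) → (ℕ → ℚ)
  | 0 => id
  | k + 1 => fun φ =>
      if k + 1 ≤ n - 1 then
        Sop a (iotaSeq n) (pos n j (k + 1)) (phiBC a n j k φ)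
      else
        Sop a (iotaSeq n) (pos n (j + (k + 1) - n) (2 * n - (k + 1))) (phiBC a n j k φ)

/-!
The forms `φ_{j;k}(x_{j;1})` are computed in closed form. The operators defining `φ_{j;k}` act
at the positions `P_k` of the chain `(j;1), …, (j;n), (j+1;n-1), …, (j+n-1;1)`, and
`φ_{j;k}(x_{j;1}) = w_{k+1} x_{P_{k+1}} - w_k x_{P_k^+}`, where `P^+` is the next position with
the same index and the weight `w` is `2` at the column `n` (coming from `a_{n-1,n} = -2`) and
`1` elsewhere. Each step is `S` at `P_{k+1}`, where the form has the positive coefficient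
`w_{k+1}`, so it subtracts `w_{k+1} β_{P_{k+1}}`. Hence the only positions where
`φ_{j;k}(x_{j;1})` has a nonzero coefficient are `P_{k+1}`, where `S` advances the chain, and
`P_k^+`, where the coefficient is negative and `S` subtracts a multiple of
`β_{(P_k^+)^-} = β_{P_k}`, undoing the previous step. Everywhere else `S` acts trivially.
-/

theorem pos_lt_pos_iff {n j i m l : ℕ} (hj : 1 ≤ j) (hm : 1 ≤ m) (hi : 1 ≤ i) (hin : i ≤ n)
    (hl : 1 ≤ l) (hln : l ≤ n) : pos n j i < pos n m l ↔ j < m ∨ j = m ∧ i < l := by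
  unfold pos
  rcases lt_trichotomy j m with h | rfl | h
  · have := Nat.mul_le_mul_right n (show j - 1 + 1 ≤ m - 1 by omega)
    rw [add_mul, one_mul] at this
    omega
  · omega
  · have := Nat.mul_le_mul_right n (show m - 1 + 1 ≤ j - 1 by omega)
    rw [add_mul, one_mul] at this
    omega

theorem pos_eq_pos_iff {n j i m l : ℕ} (hj : 1 ≤ j) (hm : 1 ≤ m) (hi : 1 ≤ i) (hin : i ≤ n)
    (hl : 1 ≤ l) (hln : l ≤ n) : pos n j i = pos n m l ↔ j = m ∧ i = l := by
  have := pos_lt_pos_iff hj hm hi hin hl hln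
  have := pos_lt_pos_iff hm hj hl hln hi hin
  omega

theorem pos_ne_zero {n j i : ℕ} (hi : 1 ≤ i) : pos n j i ≠ 0 := by
  unfold pos
  omega

theorem exists_eq_pos {n r : ℕ} (hn : 1 ≤ n) (hr : 1 ≤ r) :
    ∃ m i, 1 ≤ m ∧ 1 ≤ i ∧ i ≤ n ∧ r = pos n m i := by
  have := Nat.div_add_mod' (r - 1) n
  have := Nat.mod_lt (r - 1) (show 0 < n by omega)
  refine ⟨(r - 1) / n + 1, (r - 1) % n + 1, Nat.le_add_left _ _, Nat.le_add_left _ _, by omega,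
    ?_⟩
  rw [pos, Nat.add_sub_cancel]
  omega

theorem iotaSeq_pos {n j i : ℕ} (hi : 1 ≤ i) (hin : i ≤ n) : iotaSeq n (pos n j i) = i := by
  unfold iotaSeq pos
  rw [show (j - 1) * n + i - 1 = i - 1 + n * (j - 1) by rw [mul_comm]; omega,
    Nat.add_mul_mod_self_left, Nat.mod_eq_of_lt (by omega)]
  omega

theorem exists_pos_of_iotaSeq_eq {n j i r : ℕ} (hn : 1 ≤ n) (hi : 1 ≤ i) (hin : i ≤ n)
    (hr : 1 ≤ r) (h : iotaSeq n r = iotaSeq n (pos n j i)) : ∃ m, 1 ≤ m ∧ r = pos n m i := by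
  obtain ⟨m, i', hm, hi', hi'n, rfl⟩ := exists_eq_pos hn hr
  rw [iotaSeq_pos hi' hi'n, iotaSeq_pos hi hin] at h
  exact ⟨m, hm, h ▸ rfl⟩

theorem kplus_pos {n j i : ℕ} (hj : 1 ≤ j) (hi : 1 ≤ i) (hin : i ≤ n) :
    kplus (iotaSeq n) (pos n j i) = pos n (j + 1) i := by
  have hmem : pos n (j + 1) i ∈ {l | pos n j i < l ∧ iotaSeq n l = iotaSeq n (pos n j i)} :=
    ⟨(pos_lt_pos_iff hj (by omega) hi hin hi hin).2 (by omega),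
      by rw [iotaSeq_pos hi hin, iotaSeq_pos hi hin]⟩
  refine le_antisymm (Nat.sInf_le hmem) (le_csInf ⟨_, hmem⟩ ?_)
  rintro r ⟨hlt, hr⟩
  obtain ⟨m, hm, rfl⟩ := exists_pos_of_iotaSeq_eq (n := n) (by omega) hi hin (by omega) hr
  rw [pos_lt_pos_iff hj hm hi hin hi hin] at hlt
  exact not_lt.1 fun h => by rw [pos_lt_pos_iff hm (by omega) hi hin hi hin] at h; omega

theorem kminus_pos {n j i : ℕ} (hj : 1 ≤ j) (hi : 1 ≤ i) (hin : i ≤ n) :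
    kminus (iotaSeq n) (pos n (j + 1) i) = pos n j i := by
  have hmem : pos n j i ∈
      {l | 0 < l ∧ l < pos n (j + 1) i ∧ iotaSeq n l = iotaSeq n (pos n (j + 1) i)} :=
    ⟨Nat.pos_of_ne_zero (pos_ne_zero hi),
      (pos_lt_pos_iff hj (by omega) hi hin hi hin).2 (by omega),
      by rw [iotaSeq_pos hi hin, iotaSeq_pos hi hin]⟩
  refine le_antisymm (csSup_le ⟨_, hmem⟩ ?_) (le_csSup ⟨_, fun r hr => hr.2.1.le⟩ hmem)
  rintro r ⟨hr0, hlt, hr⟩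
  obtain ⟨m, hm, rfl⟩ := exists_pos_of_iotaSeq_eq (n := n) (by omega) hi hin hr0 hr
  rw [pos_lt_pos_iff hm (by omega) hi hin hi hin] at hlt
  exact not_lt.1 fun h => by rw [pos_lt_pos_iff hj hm hi hin hi hin] at h; omega

theorem cX_apply_pos {n j i m l : ℕ} (hj : 1 ≤ j) (hm : 1 ≤ m) (hl : 1 ≤ l) (hln : l ≤ n) :
    cX n j i (pos n m l) = if j = m ∧ i = l then 1 else 0 := by
  unfold cX
  by_cases hi : 1 ≤ i ∧ i ≤ n
  · simp only [if_pos (And.intro hj hi), coordF, pos_eq_pos_iff hm hj hl hln hi.1 hi.2, eq_comm]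
  · rw [if_neg (by tauto), if_neg (by omega)]
    rfl

theorem cX_apply_zero (n j i : ℕ) : cX n j i 0 = 0 := by
  unfold cX coordF
  split_ifs with h
  · exact if_neg (pos_ne_zero h.2.1).symm
  · rfl

theorem cX_col_zero (n j : ℕ) : cX n j 0 = 0 :=
  if_neg (by omega)

theorem cX_of_lt {n j i : ℕ} (h : n < i) : cX n j i = 0 :=
  if_neg (by omega)

def colWeight (n i : ℕ) : ℚ := if i = n then 2 else 1

theorem colWeight_pos (n i : ℕ) : 0 < colWeight n i := by
  unfold colWeight
  split_ifs <;> norm_num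

/-- `β_{(m;i)}` for type `B_n`: between `(m;i)` and `(m+1;i)` only the neighbours `(m;i+1)` and
`(m+1;i-1)` carry an index adjacent to `i`. -/
theorem betaF_aB_pos {n m i : ℕ} (hn : 2 ≤ n) (hm : 1 ≤ m) (hi : 1 ≤ i) (hin : i ≤ n) :
    betaF (aB n) (iotaSeq n) (pos n m i) =
      cX n m i - colWeight n (i + 1) • cX n m (i + 1) - cX n (m + 1) (i - 1)
        + cX n (m + 1) i := by
  funext r
  obtain rfl | hr := Nat.eq_zero_or_pos r
  · simp [betaF, cX_apply_zero, kplus_pos hm hi hin, (pos_ne_zero hi).symm, pos_ne_zero hi]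
  obtain ⟨m', i', hm', hi', hi'n, rfl⟩ := exists_eq_pos (n := n) (by omega) hr
  have hm1 : 1 ≤ m + 1 := Nat.le_add_left 1 m
  simp only [betaF, kplus_pos hm hi hin, iotaSeq_pos hi hin, iotaSeq_pos hi' hi'n,
    pos_eq_pos_iff hm' hm1 hi' hi'n hi hin, pos_eq_pos_iff hm' hm hi' hi'n hi hin,
    pos_lt_pos_iff hm hm' hi hin hi' hi'n, pos_lt_pos_iff hm' hm1 hi' hi'n hi hin,
    Pi.add_apply, Pi.sub_apply, Pi.smul_apply, smul_eq_mul, cX_apply_pos hm hm' hi' hi'n,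
    cX_apply_pos hm1 hm' hi' hi'n, pos_ne_zero hi, if_false, aB, colWeight]
  split_ifs <;> first | omega | norm_num

/-- Row and column of the position `P_k` at which `φ_{j;k}` applies its `k`-th operator. -/
def chainRow (n j k : ℕ) : ℕ := if k ≤ n then j else j + k - n

def chainCol (n k : ℕ) : ℕ := if k ≤ n then k else 2 * n - k

def chainPos (n j k : ℕ) : ℕ := pos n (chainRow n j k) (chainCol n k)

/-- `φ_{j;k}(x_{j;1})` in closed form; at `k = 0` and `k = 2n - 1` one of the two terms vanishes
because `cX` is `0` at column `0`. -/
def xiForm (n j k : ℕ) : ℕ → ℚ :=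
  colWeight n (chainCol n (k + 1)) • cX n (chainRow n j (k + 1)) (chainCol n (k + 1))
    - colWeight n (chainCol n k) • cX n (chainRow n j k + 1) (chainCol n k)

theorem le_chainRow (n j k : ℕ) : j ≤ chainRow n j k := by
  unfold chainRow
  split_ifs <;> omega

theorem chainRow_of_le {n j k : ℕ} (h : k ≤ n) : chainRow n j k = j :=
  if_pos h

theorem chainCol_of_le {n k : ℕ} (h : k ≤ n) : chainCol n k = k :=
  if_pos h

theorem chainRow_add (n j d : ℕ) : chainRow n j (n + d) = j + d := by
  unfold chainRow
  split_ifs <;> omega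

theorem chainCol_add (n d : ℕ) : chainCol n (n + d) = n - d := by
  unfold chainCol
  split_ifs <;> omega

theorem chainCol_le (n k : ℕ) : chainCol n k ≤ n := by
  unfold chainCol
  split_ifs <;> omega

theorem chainCol_succ_ne {n k : ℕ} (hk : k < 2 * n) : chainCol n (k + 1) ≠ chainCol n k := by
  unfold chainCol
  split_ifs <;> omega

theorem xiForm_sub_betaF {n j k : ℕ} (hn : 2 ≤ n) (hj : 1 ≤ j) (hk : k + 1 ≤ 2 * n - 1) :
    xiForm n j k - colWeight n (chainCol n (k + 1)) •
        betaF (aB n) (iotaSeq n) (chainPos n j (k + 1)) = xiForm n j (k + 1) := by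
  unfold xiForm chainPos
  rcases lt_trichotomy (k + 1) n with h | rfl | h
  · rw [chainRow_of_le (k := k) (by omega), chainRow_of_le h.le, chainRow_of_le h,
      chainCol_of_le (k := k) (by omega), chainCol_of_le h.le, chainCol_of_le h,
      betaF_aB_pos hn hj (by omega) h.le, Nat.add_sub_cancel,
      show colWeight n k = 1 from if_neg (by omega),
      show colWeight n (k + 1) = 1 from if_neg (by omega)]
    module
  · -- the turn of the chain at column `n`, where the weight `2` enters
    rw [chainRow_of_le (Nat.le_succ k), chainRow_of_le le_rfl, chainRow_add,
      chainCol_of_le (Nat.le_succ k), chainCol_of_le le_rfl, chainCol_add,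
      betaF_aB_pos hn hj (by omega) le_rfl, Nat.add_sub_cancel, cX_of_lt (Nat.lt_succ_self _),
      show colWeight (k + 1) k = 1 from if_neg (by omega),
      show colWeight (k + 1) (k + 1) = 2 from if_pos rfl]
    module
  · obtain ⟨c, rfl⟩ : ∃ c, k = n + c := ⟨k - n, by omega⟩
    rw [show n + c + 1 + 1 = n + (c + 2) by ring, show n + c + 1 = n + (c + 1) by ring,
      chainRow_add, chainRow_add, chainRow_add, chainCol_add, chainCol_add, chainCol_add,
      betaF_aB_pos hn (by omega) (by omega) (by omega), show n - (c + 1) + 1 = n - c by omega,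
      show n - (c + 1) - 1 = n - (c + 2) by omega, show j + (c + 1) + 1 = j + (c + 2) by ring,
      show j + c + 1 = j + (c + 1) by ring,
      show colWeight n (n - (c + 1)) = 1 from if_neg (by omega),
      show colWeight n (n - (c + 2)) = 1 from if_neg (by omega)]
    module

theorem xiForm_apply_pos {n j k m l : ℕ} (hj : 1 ≤ j) (hm : 1 ≤ m) (hl : 1 ≤ l)
    (hln : l ≤ n) :
    xiForm n j k (pos n m l) =
      (if chainRow n j (k + 1) = m ∧ chainCol n (k + 1) = l then
        colWeight n (chainCol n (k + 1)) else 0) -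
      (if chainRow n j k + 1 = m ∧ chainCol n k = l then colWeight n (chainCol n k) else 0) := by
  simp only [xiForm, Pi.sub_apply, Pi.smul_apply, smul_eq_mul,
    cX_apply_pos (hj.trans (le_chainRow n j _)) hm hl hln, cX_apply_pos (Nat.le_add_left 1 _) hm hl hln,
    mul_ite, mul_one, mul_zero]

theorem Sop_chainPos_xiForm {n j k : ℕ} (hn : 2 ≤ n) (hj : 1 ≤ j) (hk : k + 1 ≤ 2 * n - 1) :
    Sop (aB n) (iotaSeq n) (chainPos n j (k + 1)) (xiForm n j k) = xiForm n j (k + 1) := by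
  have hcol : 1 ≤ chainCol n (k + 1) := by
    unfold chainCol
    split_ifs <;> omega
  have hval : xiForm n j k (chainPos n j (k + 1)) = colWeight n (chainCol n (k + 1)) := by
    rw [chainPos, xiForm_apply_pos hj (hj.trans (le_chainRow n j _)) hcol (chainCol_le n _),
      if_pos ⟨rfl, rfl⟩, if_neg fun h => chainCol_succ_ne (by omega) h.2.symm, sub_zero]
  rw [Sop, hval, if_pos (colWeight_pos n _), xiForm_sub_betaF hn hj hk]

theorem phiBC_succ (a : ℕ → ℕ → ℤ) (n j k : ℕ) (φ : ℕ → ℚ) :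
    phiBC a n j (k + 1) φ = Sop a (iotaSeq n) (chainPos n j (k + 1)) (phiBC a n j k φ) := by
  simp only [phiBC, chainPos, chainRow, chainCol]
  split_ifs with h₁ h₂ h₂
  · rfl
  · omega
  · rw [show j + (k + 1) - n = j by omega, show 2 * n - (k + 1) = k + 1 by omega]
  · rfl

theorem phiBC_eq_xiForm {n j : ℕ} (hn : 2 ≤ n) (hj : 1 ≤ j) :
    ∀ k ≤ 2 * n - 1, phiBC (aB n) n j k (cX n j 1) = xiForm n j k
  | 0, _ => by
    simp only [phiBC, id, xiForm, chainRow_of_le (show 1 ≤ n by omega), chainCol_of_le,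
      chainCol_of_le (show 1 ≤ n by omega), Nat.zero_le, cX_col_zero, smul_zero, sub_zero,
      colWeight, if_neg (show 1 ≠ n by omega), one_smul]
  | k + 1, hk => by
    rw [phiBC_succ, phiBC_eq_xiForm hn hj k (by omega), Sop_chainPos_xiForm hn hj hk]

theorem xiForm_apply_pos_cases {n j k m l : ℕ} (hj : 1 ≤ j) (hm : 1 ≤ m) (hl : 1 ≤ l)
    (hln : l ≤ n) :
    xiForm n j k (pos n m l) = 0 ∨
      k + 1 ≤ 2 * n - 1 ∧ pos n m l = chainPos n j (k + 1) ∨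
      1 ≤ k ∧ xiForm n j k (pos n m l) = -colWeight n (chainCol n k) ∧
        kminus (iotaSeq n) (pos n m l) = chainPos n j k := by
  rw [xiForm_apply_pos hj hm hl hln]
  by_cases hsucc : chainRow n j (k + 1) = m ∧ chainCol n (k + 1) = l
  · obtain ⟨rfl, rfl⟩ := hsucc
    refine Or.inr (Or.inl ⟨?_, rfl⟩)
    unfold chainCol at hl
    split_ifs at hl <;> omega
  by_cases hcur : chainRow n j k + 1 = m ∧ chainCol n k = l
  · obtain ⟨rfl, rfl⟩ := hcur
    refine Or.inr (Or.inr ⟨?_, by rw [if_neg hsucc, if_pos ⟨rfl, rfl⟩, zero_sub], ?_⟩)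
    · unfold chainCol at hl
      split_ifs at hl <;> omega
    · exact kminus_pos (hj.trans (le_chainRow n j k)) hl hln
  · exact Or.inl (by rw [if_neg hsucc, if_neg hcur, sub_zero])

theorem typeB_Xi_closed (n : ℕ) (hn : 2 ≤ n) (j : ℕ) (hj : 1 ≤ j)
    (k : ℕ) (hk : k ≤ 2 * n - 1) (m l : ℕ) (hm : 1 ≤ m) (hl : 1 ≤ l) (hln : l ≤ n) :
    Sop (aB n) (iotaSeq n) (pos n m l) (phiBC (aB n) n j k (cX n j 1)) =
        phiBC (aB n) n j (k - 1) (cX n j 1) ∨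
    Sop (aB n) (iotaSeq n) (pos n m l) (phiBC (aB n) n j k (cX n j 1)) =
        phiBC (aB n) n j (k + 1) (cX n j 1) ∨
    Sop (aB n) (iotaSeq n) (pos n m l) (phiBC (aB n) n j k (cX n j 1)) =
        phiBC (aB n) n j k (cX n j 1) := by
  have hphi := phiBC_eq_xiForm hn hj
  rw [hphi k hk]
  rcases xiForm_apply_pos_cases (k := k) hj hm hl hln with
    hzero | ⟨hk', hnext⟩ | ⟨hk0, hval, hminus⟩
  · exact Or.inr (Or.inr (by rw [Sop, hzero]; simp))
  · exact Or.inr (Or.inl (by rw [hphi (k + 1) hk', hnext, Sop_chainPos_xiForm hn hj hk']))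
  · obtain ⟨k, rfl⟩ := Nat.exists_eq_add_of_le' hk0
    have hneg : ¬ 0 < -colWeight n (chainCol n (k + 1)) :=
      not_lt.2 (neg_nonpos.2 (colWeight_pos n _).le)
    refine Or.inl ?_
    rw [Nat.add_sub_cancel, hphi k (by omega), Sop, hval, if_neg hneg, hminus,
      ← xiForm_sub_betaF hn hj hk, neg_smul, sub_neg_eq_add, sub_add_cancel]
end
end

section
/- For type B_n, the set Σ_ι = { x ∈ ℤ^∞_{≥0 support} : φ(x) ≥ 0 for all φ ∈ Ξ_ι } is exactly the set of (x_{j;i}) satisfying: x_{j;i} = 0 unless 1 ≤ j,i ≤ n; x_{1;i} ≥ x_{2;i−1} ≥ ⋯ ≥ x_{i;1} ≥ 0 for 1 ≤ i ≤ n−1; x_{j;n} ≥ x_{j+1;n−1} ≥ ⋯ ≥ x_{n;j} ≥ 0 for 1 ≤ j ≤ n; and x_{j;n−j+1} ≥ x_{j;n−j+2} ≥ ⋯ ≥ x_{j;n} ≥ 0 for 2 ≤ j ≤ n. -/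
open scoped Classical

noncomputable section

variable {I : Type*}

/-- doubly-indexed coordinate with out-of-range convention x_{j;0} = x_{j;n+1} = 0. -/
def Yc (n : ℕ) (y : ℕ → ℕ → ℤ) (j i : ℕ) : ℤ :=
  if 1 ≤ j ∧ 1 ≤ i ∧ i ≤ n then y j i else 0

/-!
The forms `φ_{j;k}` with `k ≤ n - 1` compare neighbours along an antidiagonal,
`x_{j+1;k} ≤ x_{j;k+1}`, and those with `n ≤ k` compare neighbours in a row,
`x_{r;i+1} ≤ x_{r;i}` whenever `r + i > n`. Starting from the zero column `x_{j;0}`, the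
antidiagonal inequalities make every entry nonnegative, while a row `r > n` decreases from
`x_{r;0} = 0` and so vanishes. Conversely, every antidiagonal or row inequality is either a link
of one of the chains of the pattern or involves an entry outside the `n × n` box.
-/

namespace TypeBRealization

def AntidiagonalIneqs (n : ℕ) (y : ℕ → ℕ → ℤ) : Prop :=
  ∀ j k, 1 ≤ j → k ≤ n - 1 → y (j + 1) k ≤ y j (k + 1)

def RowIneqs (n : ℕ) (y : ℕ → ℕ → ℤ) : Prop :=
  ∀ r i, n + 1 ≤ r + i → i < n → y r (i + 1) ≤ y r i

variable {n : ℕ} {y : ℕ → ℕ → ℤ}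

theorem Yc_eq_self (hconv : ∀ j i, j = 0 ∨ i = 0 ∨ n < i → y j i = 0) : Yc n y = y := by
  funext j i
  unfold Yc
  split_ifs with h
  · rfl
  · exact (hconv j i (by omega)).symm

/-- For `n ≤ k`, the form `φ_{j;k}` is the row inequality at `r = j + k - n + 1`,
`i = 2n - k - 1`. -/
theorem forms_nonneg_iff :
    (∀ j k : ℕ, 1 ≤ j → k ≤ 2 * n - 1 →
      0 ≤ (if k ≤ n - 1 then y j (k + 1) - y (j + 1) k
           else y (j + k - n + 1) (2 * n - k - 1) - y (j + k - n + 1) (2 * n - k))) ↔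
    AntidiagonalIneqs n y ∧ RowIneqs n y := by
  constructor
  · intro H
    refine ⟨fun j k hj hk => ?_, fun r i hri hi => ?_⟩
    · have h := H j k hj (by omega)
      rw [if_pos hk] at h
      linarith
    · have h := H (r + i - n) (2 * n - 1 - i) (by omega) (by omega)
      rw [if_neg (by omega), show r + i - n + (2 * n - 1 - i) - n + 1 = r by omega,
        show 2 * n - (2 * n - 1 - i) - 1 = i by omega,
        show 2 * n - (2 * n - 1 - i) = i + 1 by omega] at h
      linarith
  · rintro ⟨hA, hR⟩ j k hj hk
    split_ifs with hkn
    · linarith [hA j k hj hkn]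
    · have h := hR (j + k - n + 1) (2 * n - k - 1) (by omega) (by omega)
      rw [show 2 * n - k - 1 + 1 = 2 * n - k by omega] at h
      linarith

theorem nonneg_of_antidiagonalIneqs (hA : AntidiagonalIneqs n y) (h0 : ∀ j, y j 0 = 0)
    {j i : ℕ} (hj : 1 ≤ j) (hi : i ≤ n) : 0 ≤ y j i := by
  induction i generalizing j with
  | zero => exact (h0 j).ge
  | succ i ih => exact (ih (by omega) (by omega)).trans (hA j i hj (by omega))

theorem nonpos_of_rowIneqs (hR : RowIneqs n y) (h0 : ∀ j, y j 0 = 0)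
    {r i : ℕ} (hr : n < r) (hi : i ≤ n) : y r i ≤ 0 := by
  induction i with
  | zero => exact (h0 r).le
  | succ i ih => exact (hR r i (by omega) (by omega)).trans (ih (by omega))

theorem eq_zero_outside_box (hconv : ∀ j i, j = 0 ∨ i = 0 ∨ n < i → y j i = 0)
    (hA : AntidiagonalIneqs n y) (hR : RowIneqs n y) (j i : ℕ)
    (h : ¬(1 ≤ j ∧ j ≤ n ∧ 1 ≤ i ∧ i ≤ n)) : y j i = 0 := by
  have h0 : ∀ j, y j 0 = 0 := fun j => hconv j 0 (by simp)
  by_cases hji : j = 0 ∨ i = 0 ∨ n < i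
  · exact hconv j i hji
  · exact le_antisymm (nonpos_of_rowIneqs hR h0 (by omega) (by omega))
      (nonneg_of_antidiagonalIneqs hA h0 (by omega) (by omega))

theorem antidiagonalIneqs_of_chains
    (hbox : ∀ j i, ¬(1 ≤ j ∧ j ≤ n ∧ 1 ≤ i ∧ i ≤ n) → y j i = 0)
    (hlow : ∀ i, 1 ≤ i → i ≤ n - 1 →
      (∀ t, 1 ≤ t → t < i → y (t + 1) (i - t) ≤ y t (i - t + 1)) ∧ 0 ≤ y i 1)
    (hhigh : ∀ j, 1 ≤ j → j ≤ n →
      (∀ t, j ≤ t → t < n → y (t + 1) (n + j - t - 1) ≤ y t (n + j - t)) ∧ 0 ≤ y n j) :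
    AntidiagonalIneqs n y := by
  intro j k hj hk
  rcases lt_or_ge n j with hjn | hjn
  · rw [hbox j (k + 1) (by omega), hbox (j + 1) k (by omega)]
  obtain rfl | hk0 := Nat.eq_zero_or_pos k
  · rw [hbox (j + 1) 0 (by omega)]
    rcases hjn.lt_or_eq with hjn | rfl
    · exact (hlow j hj (by omega)).2
    · exact (hhigh 1 le_rfl (by omega)).2
  rcases le_or_gt (j + k) (n - 1) with hsmall | hlarge
  · simpa [show j + k - j = k by omega] using (hlow (j + k) (by omega) hsmall).1 j hj (by omega)
  rcases hjn.lt_or_eq with hjn | rfl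
  · have h := (hhigh (j + k + 1 - n) (by omega) (by omega)).1 j (by omega) hjn
    rwa [show n + (j + k + 1 - n) - j - 1 = k by omega,
      show n + (j + k + 1 - n) - j = k + 1 by omega] at h
  · rw [hbox (j + 1) k (by omega)]
    exact (hhigh (k + 1) (by omega) (by omega)).2

theorem rowIneqs_of_chains
    (hbox : ∀ j i, ¬(1 ≤ j ∧ j ≤ n ∧ 1 ≤ i ∧ i ≤ n) → y j i = 0)
    (hrow : ∀ j, 2 ≤ j → j ≤ n →
      (∀ i, n - j + 1 ≤ i → i < n → y j (i + 1) ≤ y j i) ∧ 0 ≤ y j n) :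
    RowIneqs n y := by
  intro r i hri hi
  rcases le_or_gt r n with hrn | hrn
  · exact (hrow r (by omega) hrn).1 i (by omega) hi
  · rw [hbox r (i + 1) (by omega), hbox r i (by omega)]

end TypeBRealization

open TypeBRealization in
theorem typeB_polyhedral_realization_general (n : ℕ) (y : ℕ → ℕ → ℤ)
    (hconv : ∀ j i, j = 0 ∨ i = 0 ∨ n < i → y j i = 0) :
    (∀ j k : ℕ, 1 ≤ j → k ≤ 2 * n - 1 →
      0 ≤ (if k ≤ n - 1 then Yc n y j (k + 1) - Yc n y (j + 1) k
           else Yc n y (j + k - n + 1) (2 * n - k - 1) - Yc n y (j + k - n + 1) (2 * n - k)))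
    ↔
    ((∀ j i, ¬(1 ≤ j ∧ j ≤ n ∧ 1 ≤ i ∧ i ≤ n) → y j i = 0) ∧
     (∀ i, 1 ≤ i → i ≤ n - 1 →
        (∀ t, 1 ≤ t → t < i → y (t + 1) (i - t) ≤ y t (i - t + 1)) ∧ 0 ≤ y i 1) ∧
     (∀ j, 1 ≤ j → j ≤ n →
        (∀ t, j ≤ t → t < n → y (t + 1) (n + j - t - 1) ≤ y t (n + j - t)) ∧ 0 ≤ y n j) ∧
     (∀ j, 2 ≤ j → j ≤ n →
        (∀ i, n - j + 1 ≤ i → i < n → y j (i + 1) ≤ y j i) ∧ 0 ≤ y j n)) := by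
  rw [Yc_eq_self hconv, forms_nonneg_iff]
  constructor
  · rintro ⟨hA, hR⟩
    have hpos : ∀ {j i}, 1 ≤ j → i ≤ n → 0 ≤ y j i :=
      nonneg_of_antidiagonalIneqs hA fun j => hconv j 0 (by simp)
    refine ⟨eq_zero_outside_box hconv hA hR,
      fun i hi hin => ⟨fun t ht hti => hA t (i - t) ht (by omega), hpos hi (by omega)⟩,
      fun j hj hjn => ⟨fun t htj htn => ?_, hpos (by omega) hjn⟩,
      fun j hj hjn => ⟨fun i hi hin => hR j i (by omega) hin, hpos (by omega) le_rfl⟩⟩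
    have h := hA t (n + j - t - 1) (by omega) (by omega)
    rwa [show n + j - t - 1 + 1 = n + j - t by omega] at h
  · rintro ⟨hbox, hlow, hhigh, hrow⟩
    exact ⟨antidiagonalIneqs_of_chains hbox hlow hhigh, rowIneqs_of_chains hbox hrow⟩

theorem typeB_polyhedral_realization (n : ℕ) (hn : 2 ≤ n) (y : ℕ → ℕ → ℤ)
    (hconv : ∀ j i, j = 0 ∨ i = 0 ∨ n < i → y j i = 0)
    (hfin : ∃ N, ∀ j, N ≤ j → ∀ i, y j i = 0) :
    (∀ j k : ℕ, 1 ≤ j → k ≤ 2 * n - 1 →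
      0 ≤ (if k ≤ n - 1 then Yc n y j (k + 1) - Yc n y (j + 1) k
           else Yc n y (j + k - n + 1) (2 * n - k - 1) - Yc n y (j + k - n + 1) (2 * n - k)))
    ↔
    ((∀ j i, ¬(1 ≤ j ∧ j ≤ n ∧ 1 ≤ i ∧ i ≤ n) → y j i = 0) ∧
     (∀ i, 1 ≤ i → i ≤ n - 1 →
        (∀ t, 1 ≤ t → t < i → y (t + 1) (i - t) ≤ y t (i - t + 1)) ∧ 0 ≤ y i 1) ∧
     (∀ j, 1 ≤ j → j ≤ n →
        (∀ t, j ≤ t → t < n → y (t + 1) (n + j - t - 1) ≤ y t (n + j - t)) ∧ 0 ≤ y n j) ∧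
     (∀ j, 2 ≤ j → j ≤ n →
        (∀ i, n - j + 1 ≤ i → i < n → y j (i + 1) ≤ y j i) ∧ 0 ≤ y j n)) :=
  typeB_polyhedral_realization_general n y hconv
end
end

section
/- For type C_n, the polyhedral realization Σ_ι determined by the forms φ_{j;k}(x_{j;1}) is exactly the set of (x_{j;i}) with: x_{j;i}=0 unless 1 ≤ j,i ≤ n; x_{1;i} ≥ x_{2;i−1} ≥ ⋯ ≥ x_{i;1} ≥ 0 for 1 ≤ i ≤ n−1; 2x_{j;n} ≥ x_{j+1;n−1} ≥ ⋯ ≥ x_{n;j} ≥ 0 for 1 ≤ j ≤ n−1; and x_{j;n−j+1} ≥ x_{j;n−j+2} ≥ ⋯ ≥ x_{j;n−1} ≥ 2x_{j;n} ≥ 0 for 2 ≤ j ≤ n. -/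
open scoped Classical

noncomputable section

variable {I : Type*}

/-! Each form `φ_{j;k}` is one of four elementary inequalities between neighbouring
coordinates: `x_{j+1;k} ≤ x_{j;k+1}` along anti-diagonals, `x_{j+1;n-1} ≤ 2x_{j;n}`,
`2x_{j;n} ≤ x_{j;n-1}`, and `x_{j;i+1} ≤ x_{j;i}` along a row to the right of the
anti-diagonal `i + j = n`. Chaining the first family down to `x_{j;0} = 0` makes every
coordinate nonnegative. A row `j > n` then lies entirely to the right of that anti-diagonal,
so it decreases from `x_{j;0} = 0` while staying nonnegative, and vanishes; its last entry is
squeezed by `0 ≤ x_{j+1;n-1} ≤ 2x_{j;n} ≤ 0`. On the square `[1, n]²` the four families are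
exactly the chains of the explicit description. -/

/-- The form `φ_{j;k}(x_{j;1})`, with `x j i` for `x_{j;i}`. -/
def typeCForm (n : ℕ) (x : ℕ → ℕ → ℤ) (j k : ℕ) : ℤ :=
  if k ≤ n - 2 then x j (k + 1) - x (j + 1) k
  else if k = n - 1 then 2 * x j n - x (j + 1) (n - 1)
  else if k = n then x (j + 1) (n - 1) - 2 * x (j + 1) n
  else x (j + k - n + 1) (2 * n - k - 1) - x (j + k - n + 1) (2 * n - k)

structure SatisfiesTypeCForms (n : ℕ) (x : ℕ → ℕ → ℤ) : Prop where
  antidiag_le : ∀ j k, 1 ≤ j → k ≤ n - 2 → x (j + 1) k ≤ x j (k + 1)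
  le_two_mul_last : ∀ j, 1 ≤ j → x (j + 1) (n - 1) ≤ 2 * x j n
  two_mul_last_le : ∀ j, 2 ≤ j → 2 * x j n ≤ x j (n - 1)
  row_succ_le : ∀ j i, n + 1 ≤ i + j → i ≤ n - 2 → x j (i + 1) ≤ x j i

def TypeCTableau (n : ℕ) (y : ℕ → ℕ → ℤ) : Prop :=
  (∀ j i, ¬(1 ≤ j ∧ j ≤ n ∧ 1 ≤ i ∧ i ≤ n) → y j i = 0) ∧
  (∀ i, 1 ≤ i → i ≤ n - 1 →
    (∀ t, 1 ≤ t → t < i → y (t + 1) (i - t) ≤ y t (i - t + 1)) ∧ 0 ≤ y i 1) ∧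
  (∀ j, 1 ≤ j → j ≤ n - 1 →
    y (j + 1) (n - 1) ≤ 2 * y j n ∧
    (∀ t, j + 1 ≤ t → t < n → y (t + 1) (n + j - t - 1) ≤ y t (n + j - t)) ∧
    0 ≤ y n j) ∧
  (∀ j, 2 ≤ j → j ≤ n →
    (∀ i, n - j + 1 ≤ i → i < n - 1 → y j (i + 1) ≤ y j i) ∧
    2 * y j n ≤ y j (n - 1) ∧ 0 ≤ 2 * y j n)

section

variable {n : ℕ} {x : ℕ → ℕ → ℤ}

theorem Yc_eq_self (hx : ∀ j i, j = 0 ∨ i = 0 ∨ n < i → x j i = 0) : Yc n x = x := by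
  funext j i
  unfold Yc
  split_ifs with h
  · rfl
  · exact (hx j i (by omega)).symm

theorem typeCForm_of_le_sub_two {j k : ℕ} (hk : k ≤ n - 2) :
    typeCForm n x j k = x j (k + 1) - x (j + 1) k :=
  if_pos hk

theorem typeCForm_sub_one (hn : 2 ≤ n) (j : ℕ) :
    typeCForm n x j (n - 1) = 2 * x j n - x (j + 1) (n - 1) := by
  rw [typeCForm, if_neg (by omega), if_pos rfl]

theorem typeCForm_self (hn : 2 ≤ n) (j : ℕ) :
    typeCForm n x j n = x (j + 1) (n - 1) - 2 * x (j + 1) n := by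
  rw [typeCForm, if_neg (by omega), if_neg (by omega), if_pos rfl]

theorem typeCForm_two_mul_sub_one_sub (hn : 2 ≤ n) {i : ℕ} (hi : i ≤ n - 2) (j : ℕ) :
    typeCForm n x j (2 * n - 1 - i) = x (j + n - i) i - x (j + n - i) (i + 1) := by
  have h₁ : ¬2 * n - 1 - i ≤ n - 2 := by omega
  have h₂ : 2 * n - 1 - i ≠ n - 1 := by omega
  have h₃ : 2 * n - 1 - i ≠ n := by omega
  rw [typeCForm, if_neg h₁, if_neg h₂, if_neg h₃,
    show j + (2 * n - 1 - i) - n + 1 = j + n - i by omega,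
    show 2 * n - (2 * n - 1 - i) - 1 = i by omega, show 2 * n - (2 * n - 1 - i) = i + 1 by omega]

theorem typeCForm_nonneg_iff (hn : 2 ≤ n) :
    (∀ j k, 1 ≤ j → k ≤ 2 * n - 1 → 0 ≤ typeCForm n x j k) ↔
      SatisfiesTypeCForms n x := by
  constructor
  · intro hφ
    refine ⟨fun j k hj hk => ?_, fun j hj => ?_, fun j hj => ?_, fun j i hij hi => ?_⟩
    · have := hφ j k hj (by omega)
      rw [typeCForm_of_le_sub_two hk] at this
      omega
    · have := hφ j (n - 1) hj (by omega)
      rw [typeCForm_sub_one hn] at this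
      omega
    · have := hφ (j - 1) n (by omega) (by omega)
      rw [typeCForm_self hn, Nat.sub_add_cancel (by omega)] at this
      omega
    · have := hφ (i + j - n) (2 * n - 1 - i) (by omega) (by omega)
      rw [typeCForm_two_mul_sub_one_sub hn hi, show i + j - n + n - i = j by omega] at this
      omega
  · intro h j k hj hk
    obtain hk | rfl | rfl | hk : k ≤ n - 2 ∨ k = n - 1 ∨ k = n ∨ n < k := by omega
    · rw [typeCForm_of_le_sub_two hk]
      linarith [h.antidiag_le j k hj hk]
    · rw [typeCForm_sub_one hn]
      linarith [h.le_two_mul_last j hj]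
    · rw [typeCForm_self hn]
      linarith [h.two_mul_last_le (j + 1) (by omega)]
    · obtain ⟨i, hi, rfl⟩ : ∃ i, i ≤ n - 2 ∧ k = 2 * n - 1 - i :=
        ⟨2 * n - 1 - k, by omega, by omega⟩
      rw [typeCForm_two_mul_sub_one_sub hn hi]
      linarith [h.row_succ_le (j + n - i) i (by omega) hi]

namespace SatisfiesTypeCForms

theorem nonneg (h : SatisfiesTypeCForms n x) (hx : ∀ j, x j 0 = 0) {j i : ℕ} (hj : 1 ≤ j)
    (hi : i ≤ n - 1) : 0 ≤ x j i := by
  induction i generalizing j with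
  | zero => exact (hx j).ge
  | succ c ih => exact (ih (by omega) (by omega)).trans (h.antidiag_le j c hj (by omega))

theorem two_mul_last_nonneg (h : SatisfiesTypeCForms n x) (hx : ∀ j, x j 0 = 0) {j : ℕ}
    (hj : 1 ≤ j) : 0 ≤ 2 * x j n :=
  (h.nonneg hx (by omega) le_rfl).trans (h.le_two_mul_last j hj)

theorem eq_zero_of_lt (h : SatisfiesTypeCForms n x) (hn : 2 ≤ n) (hx : ∀ j, x j 0 = 0)
    {j i : ℕ} (hj : n < j) (hi : i ≤ n) : x j i = 0 := by
  induction i generalizing j with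
  | zero => exact hx j
  | succ c ih =>
    obtain hc | hc : c + 1 ≤ n - 1 ∨ c + 1 = n := by omega
    · have := h.row_succ_le j c (by omega) (by omega)
      linarith [ih hj (by omega), h.nonneg hx (j := j) (by omega) hc]
    · have hprev : ∀ m, n < m → x m (n - 1) = 0 := fun m hm => by
        simpa [show c = n - 1 by omega] using ih hm (by omega)
      rw [hc]
      linarith [h.two_mul_last_le j (by omega), h.le_two_mul_last j (by omega), hprev j hj,
        hprev (j + 1) (by omega)]

theorem typeCTableau (h : SatisfiesTypeCForms n x) (hn : 2 ≤ n)
    (hx : ∀ j i, j = 0 ∨ i = 0 ∨ n < i → x j i = 0) : TypeCTableau n x := by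
  have hx0 : ∀ j, x j 0 = 0 := fun j => hx j 0 (by omega)
  refine ⟨fun j i hji => ?_,
    fun i hi hi' =>
      ⟨fun t ht hti => h.antidiag_le t (i - t) ht (by omega), h.nonneg hx0 hi (by omega)⟩,
    fun j hj hj' => ⟨h.le_two_mul_last j hj, fun t ht htn => ?_, h.nonneg hx0 (by omega) hj'⟩,
    fun j hj hj' => ⟨fun i hi hi' => h.row_succ_le j i (by omega) (by omega),
      h.two_mul_last_le j hj, h.two_mul_last_nonneg hx0 (by omega)⟩⟩
  · by_cases hji' : j = 0 ∨ i = 0 ∨ n < i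
    · exact hx j i hji'
    · exact h.eq_zero_of_lt hn hx0 (by omega) (by omega)
  · convert h.antidiag_le t (n + j - t - 1) (by omega) (by omega) using 2
    omega

end SatisfiesTypeCForms

namespace TypeCTableau

theorem eq_zero (hT : TypeCTableau n x) {j i : ℕ} (h : n < j ∨ i = 0 ∨ n < i) : x j i = 0 :=
  hT.1 j i (by omega)

theorem antidiag_le (hT : TypeCTableau n x) (hn : 2 ≤ n) {j k : ℕ} (hj : 1 ≤ j)
    (hk : k ≤ n - 2) : x (j + 1) k ≤ x j (k + 1) := by
  obtain ⟨-, hcol, hrow, -⟩ := id hT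
  obtain hjn | hjn : n ≤ j ∨ j ≤ n - 1 := by omega
  · rw [hT.eq_zero (by omega)]
    obtain rfl | hjn := hjn.eq_or_lt
    · exact (hrow (k + 1) (by omega) (by omega)).2.2
    · exact (hT.eq_zero (.inl hjn)).ge
  obtain rfl | hk0 := Nat.eq_zero_or_pos k
  · rw [hT.eq_zero (.inr (.inl rfl))]
    exact (hcol j hj hjn).2
  obtain hjk | hjk : j + k ≤ n - 1 ∨ n ≤ j + k := by omega
  · simpa only [Nat.add_sub_cancel_left] using (hcol (j + k) (by omega) hjk).1 j hj (by omega)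
  · convert (hrow (j + k + 1 - n) (by omega) (by omega)).2.1 j (by omega) (by omega) using 2 <;>
      omega

theorem satisfiesTypeCForms (hT : TypeCTableau n x) (hn : 2 ≤ n) : SatisfiesTypeCForms n x := by
  obtain ⟨-, -, hrow, hlast⟩ := id hT
  refine ⟨fun j k hj hk => hT.antidiag_le hn hj hk, fun j hj => ?_, fun j hj => ?_,
    fun j i hij hi => ?_⟩
  · obtain hjn | rfl | hjn : j ≤ n - 1 ∨ j = n ∨ n < j := by omega
    · exact (hrow j hj hjn).1
    · rw [hT.eq_zero (.inl (Nat.lt_succ_self j))]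
      exact (hlast j hn le_rfl).2.2
    · simp [hT.eq_zero (i := n) (.inl hjn),
        hT.eq_zero (i := n - 1) (.inl (Nat.lt_succ_of_lt hjn))]
  · obtain hjn | hjn : j ≤ n ∨ n < j := by omega
    · exact (hlast j hj hjn).2.1
    · simp [hT.eq_zero (i := n) (.inl hjn), hT.eq_zero (i := n - 1) (.inl hjn)]
  · obtain hjn | hjn : j ≤ n ∨ n < j := by omega
    · exact (hlast j (by omega) hjn).1 i (by omega) (by omega)
    · rw [hT.eq_zero (.inl hjn), hT.eq_zero (.inl hjn)]

end TypeCTableau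

end

theorem typeC_polyhedral_realization_general (n : ℕ) (hn : 2 ≤ n) (y : ℕ → ℕ → ℤ)
    (hconv : ∀ j i, j = 0 ∨ i = 0 ∨ n < i → y j i = 0) :
    (∀ j k : ℕ, 1 ≤ j → k ≤ 2 * n - 1 →
      0 ≤ (if k ≤ n - 2 then Yc n y j (k + 1) - Yc n y (j + 1) k
           else if k = n - 1 then 2 * Yc n y j n - Yc n y (j + 1) (n - 1)
           else if k = n then Yc n y (j + 1) (n - 1) - 2 * Yc n y (j + 1) n
           else Yc n y (j + k - n + 1) (2 * n - k - 1) - Yc n y (j + k - n + 1) (2 * n - k)))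
    ↔
    ((∀ j i, ¬(1 ≤ j ∧ j ≤ n ∧ 1 ≤ i ∧ i ≤ n) → y j i = 0) ∧
     (∀ i, 1 ≤ i → i ≤ n - 1 →
        (∀ t, 1 ≤ t → t < i → y (t + 1) (i - t) ≤ y t (i - t + 1)) ∧ 0 ≤ y i 1) ∧
     (∀ j, 1 ≤ j → j ≤ n - 1 →
        y (j + 1) (n - 1) ≤ 2 * y j n ∧
        (∀ t, j + 1 ≤ t → t < n → y (t + 1) (n + j - t - 1) ≤ y t (n + j - t)) ∧
        0 ≤ y n j) ∧
     (∀ j, 2 ≤ j → j ≤ n →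
        (∀ i, n - j + 1 ≤ i → i < n - 1 → y j (i + 1) ≤ y j i) ∧
        2 * y j n ≤ y j (n - 1) ∧ 0 ≤ 2 * y j n)) := by
  rw [Yc_eq_self hconv]
  exact (typeCForm_nonneg_iff hn).trans
    ⟨fun h => h.typeCTableau hn hconv, fun hT => TypeCTableau.satisfiesTypeCForms hT hn⟩

theorem typeC_polyhedral_realization (n : ℕ) (hn : 2 ≤ n) (y : ℕ → ℕ → ℤ)
    (hconv : ∀ j i, j = 0 ∨ i = 0 ∨ n < i → y j i = 0)
    (hfin : ∃ N, ∀ j, N ≤ j → ∀ i, y j i = 0) :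
    (∀ j k : ℕ, 1 ≤ j → k ≤ 2 * n - 1 →
      0 ≤ (if k ≤ n - 2 then Yc n y j (k + 1) - Yc n y (j + 1) k
           else if k = n - 1 then 2 * Yc n y j n - Yc n y (j + 1) (n - 1)
           else if k = n then Yc n y (j + 1) (n - 1) - 2 * Yc n y (j + 1) n
           else Yc n y (j + k - n + 1) (2 * n - k - 1) - Yc n y (j + k - n + 1) (2 * n - k)))
    ↔
    ((∀ j i, ¬(1 ≤ j ∧ j ≤ n ∧ 1 ≤ i ∧ i ≤ n) → y j i = 0) ∧
     (∀ i, 1 ≤ i → i ≤ n - 1 →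
        (∀ t, 1 ≤ t → t < i → y (t + 1) (i - t) ≤ y t (i - t + 1)) ∧ 0 ≤ y i 1) ∧
     (∀ j, 1 ≤ j → j ≤ n - 1 →
        y (j + 1) (n - 1) ≤ 2 * y j n ∧
        (∀ t, j + 1 ≤ t → t < n → y (t + 1) (n + j - t - 1) ≤ y t (n + j - t)) ∧
        0 ≤ y n j) ∧
     (∀ j, 2 ≤ j → j ≤ n →
        (∀ i, n - j + 1 ≤ i → i < n - 1 → y j (i + 1) ≤ y j i) ∧
        2 * y j n ≤ y j (n - 1) ∧ 0 ≤ 2 * y j n)) :=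
  typeC_polyhedral_realization_general n hn y hconv
end
end

section
/- For type F_4 with ι = (…,4,3,2,1,4,3,2,1), every point x of the set Σ_ι cut out by the 38 explicit linear inequalities has all coordinates nonnegative, and satisfies x_{m;i} = 0 for all m ≥ 7 and 1 ≤ i ≤ 4; in particular the chain of inequalities x_{j;2} ≥ x_{j+1;1}, 2x_{j;3} ≥ x_{j+1;2}, 2x_{j;4} ≥ x_{j+3;1} together with x_{j;1} ≥ 0 forces nonnegativity, and the inequalities x_{j+5;1} ≥ x_{j+5;2}, x_{j+4;2} ≥ 2x_{j+4;3}, x_{j+3;1} ≥ x_{j+3;4} together with −x_{j+6;1} ≥ 0 force eventual vanishing. -/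
/-!
The inequalities `x_{j;2} ≥ x_{j+1;1}`, `2x_{j;3} ≥ x_{j+1;2}`, `2x_{j;4} ≥ x_{j+3;1}` bound every
coordinate from below by a coordinate `x_{k;1}` further along, and `x_{k;1} ≥ 0`; so all coordinates
are nonnegative. Conversely `x_{m;2} ≤ x_{m;1}`, `2x_{m;3} ≤ x_{m;2}`, `x_{m;4} ≤ x_{m;1}` bound the
coordinates of level `m ≥ 7` from above by `x_{m;1} ≤ 0`, which together with nonnegativity forces
them to vanish.
-/

open scoped Classical

noncomputable section

variable {I : Type*}

section

variable (y : ℕ → ℕ → ℤ)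

theorem nonneg_of_chain (h1 : ∀ j, 1 ≤ j → 0 ≤ y j 1)
    (h2 : ∀ j, 1 ≤ j → y (j + 1) 1 ≤ y j 2) (h3 : ∀ j, 1 ≤ j → y (j + 1) 2 ≤ 2 * y j 3)
    (h4 : ∀ j, 1 ≤ j → y (j + 3) 1 ≤ 2 * y j 4) :
    ∀ j, 1 ≤ j → ∀ i, 1 ≤ i → i ≤ 4 → 0 ≤ y j i := by
  intro j hj i hi1 hi4
  have hy2 : ∀ k, 1 ≤ k → 0 ≤ y k 2 := fun k hk => (h1 (k + 1) (by omega)).trans (h2 k hk)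
  interval_cases i
  · exact h1 j hj
  · exact hy2 j hj
  · linarith [h3 j hj, hy2 (j + 1) (by omega)]
  · linarith [h4 j hj, h1 (j + 3) (by omega)]

theorem nonneg_of_nonneg_of_support (hconv : ∀ j i, j = 0 ∨ i = 0 ∨ 4 < i → y j i = 0)
    (hpos : ∀ j, 1 ≤ j → ∀ i, 1 ≤ i → i ≤ 4 → 0 ≤ y j i) (j i : ℕ) : 0 ≤ y j i := by
  by_cases h : j = 0 ∨ i = 0 ∨ 4 < i
  · exact (hconv j i h).ge
  · exact hpos j (by omega) i (by omega) (by omega)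

end

theorem eq_zero_of_nonneg_of_chain {x : ℕ → ℤ} (hnn : ∀ i, 0 ≤ x i) (h1 : x 1 ≤ 0)
    (h2 : x 2 ≤ x 1) (h3 : 2 * x 3 ≤ x 2) (h4 : x 4 ≤ x 1) :
    ∀ i, 1 ≤ i → i ≤ 4 → x i = 0 := by
  intro i hi1 hi4
  have := hnn 1; have := hnn 2; have := hnn 3; have := hnn 4
  interval_cases i <;> omega

theorem forall_of_forall_add {P : ℕ → Prop} (k : ℕ) (h : ∀ j, 1 ≤ j → P (j + k)) :
    ∀ m, k + 1 ≤ m → P m := fun m hm => by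
  simpa [Nat.sub_add_cancel (show k ≤ m by omega)] using h (m - k) (by omega)

theorem typeF4_nonneg_and_vanishing_general (y : ℕ → ℕ → ℤ)
    (hconv : ∀ j i, j = 0 ∨ i = 0 ∨ 4 < i → y j i = 0)
    (hSigma : ∀ j : ℕ, 1 ≤ j →
      0 ≤ y j 1 ∧
      y (j + 1) 1 ≤ y j 2 ∧
      y (j + 1) 2 ≤ 2 * y j 3 ∧
      y (j + 3) 1 ≤ 2 * y j 4 ∧
      2 * y (j + 1) 4 ≤ y (j + 1) 2 ∧
      y (j + 3) 2 ≤ y (j + 2) 2 ∧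
      y (j + 4) 1 ≤ y (j + 2) 1 ∧
      y (j + 4) 2 ≤ 2 * y (j + 2) 4 ∧
      y (j + 3) 4 ≤ y (j + 3) 1 ∧
      2 * y (j + 4) 3 ≤ y (j + 4) 2 ∧
      y (j + 5) 2 ≤ y (j + 5) 1 ∧
      y (j + 6) 1 ≤ 0 ∧
      2 * y (j + 1) 3 ≤ 2 * y j 4 + y (j + 1) 2 ∧
      y (j + 2) 1 + y (j + 2) 2 ≤ 2 * y j 4 ∧
      2 * y (j + 1) 4 + y (j + 3) 1 ≤ 2 * y (j + 1) 3 ∧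
      2 * y (j + 2) 3 ≤ y (j + 2) 1 + y (j + 2) 2 ∧
      2 * y (j + 2) 3 + y (j + 3) 1 ≤ 2 * y (j + 2) 2 ∧
      y (j + 3) 2 ≤ y (j + 2) 1 + y (j + 3) 1 ∧
      2 * y (j + 3) 2 ≤ 2 * y (j + 2) 3 + y (j + 3) 1 ∧
      2 * y (j + 3) 3 ≤ 2 * y (j + 2) 4 + y (j + 3) 1 ∧
      y (j + 3) 2 + y (j + 4) 1 ≤ 2 * y (j + 2) 3 ∧
      y (j + 3) 1 + y (j + 4) 1 ≤ y (j + 2) 2 ∧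
      2 * y (j + 3) 4 + y (j + 4) 1 ≤ y (j + 3) 2 ∧
      2 * y (j + 3) 4 + y (j + 4) 2 ≤ 2 * y (j + 3) 3 ∧
      2 * y (j + 1) 4 + y (j + 2) 2 ≤ 2 * y (j + 1) 3 + y (j + 2) 1 ∧
      2 * y (j + 3) 3 + y (j + 4) 1 ≤ 2 * y (j + 2) 4 + y (j + 3) 2) :
    (∀ j i : ℕ, 0 ≤ y j i) ∧
    (∀ m : ℕ, 7 ≤ m → ∀ i : ℕ, 1 ≤ i → i ≤ 4 → y m i = 0) := by
  have hnn : ∀ j i, 0 ≤ y j i := nonneg_of_nonneg_of_support y hconv <|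
    nonneg_of_chain y (fun j hj => (hSigma j hj).1) (fun j hj => (hSigma j hj).2.1)
      (fun j hj => (hSigma j hj).2.2.1) (fun j hj => (hSigma j hj).2.2.2.1)
  have h1 : ∀ m, 7 ≤ m → y m 1 ≤ 0 := forall_of_forall_add 6 fun j hj => (hSigma j hj).2.2.2.2.2.2.2.2.2.2.2.1
  have h2 : ∀ m, 6 ≤ m → y m 2 ≤ y m 1 := forall_of_forall_add 5 fun j hj => (hSigma j hj).2.2.2.2.2.2.2.2.2.2.1
  have h3 : ∀ m, 5 ≤ m → 2 * y m 3 ≤ y m 2 := forall_of_forall_add 4 fun j hj => (hSigma j hj).2.2.2.2.2.2.2.2.2.1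
  have h4 : ∀ m, 4 ≤ m → y m 4 ≤ y m 1 := forall_of_forall_add 3 fun j hj => (hSigma j hj).2.2.2.2.2.2.2.2.1
  exact ⟨hnn, fun m hm => eq_zero_of_nonneg_of_chain (hnn m) (h1 m hm) (h2 m (by omega))
    (h3 m (by omega)) (h4 m (by omega))⟩

theorem typeF4_nonneg_and_vanishing (y : ℕ → ℕ → ℤ)
    (hconv : ∀ j i, j = 0 ∨ i = 0 ∨ 4 < i → y j i = 0)
    (hfin : ∃ N, ∀ j, N ≤ j → ∀ i, y j i = 0)
    (hSigma : ∀ j : ℕ, 1 ≤ j →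
      0 ≤ y j 1 ∧
      y (j + 1) 1 ≤ y j 2 ∧
      y (j + 1) 2 ≤ 2 * y j 3 ∧
      y (j + 3) 1 ≤ 2 * y j 4 ∧
      2 * y (j + 1) 4 ≤ y (j + 1) 2 ∧
      y (j + 3) 2 ≤ y (j + 2) 2 ∧
      y (j + 4) 1 ≤ y (j + 2) 1 ∧
      y (j + 4) 2 ≤ 2 * y (j + 2) 4 ∧
      y (j + 3) 4 ≤ y (j + 3) 1 ∧
      2 * y (j + 4) 3 ≤ y (j + 4) 2 ∧
      y (j + 5) 2 ≤ y (j + 5) 1 ∧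
      y (j + 6) 1 ≤ 0 ∧
      2 * y (j + 1) 3 ≤ 2 * y j 4 + y (j + 1) 2 ∧
      y (j + 2) 1 + y (j + 2) 2 ≤ 2 * y j 4 ∧
      2 * y (j + 1) 4 + y (j + 3) 1 ≤ 2 * y (j + 1) 3 ∧
      2 * y (j + 2) 3 ≤ y (j + 2) 1 + y (j + 2) 2 ∧
      2 * y (j + 2) 3 + y (j + 3) 1 ≤ 2 * y (j + 2) 2 ∧
      y (j + 3) 2 ≤ y (j + 2) 1 + y (j + 3) 1 ∧
      2 * y (j + 3) 2 ≤ 2 * y (j + 2) 3 + y (j + 3) 1 ∧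
      2 * y (j + 3) 3 ≤ 2 * y (j + 2) 4 + y (j + 3) 1 ∧
      y (j + 3) 2 + y (j + 4) 1 ≤ 2 * y (j + 2) 3 ∧
      y (j + 3) 1 + y (j + 4) 1 ≤ y (j + 2) 2 ∧
      2 * y (j + 3) 4 + y (j + 4) 1 ≤ y (j + 3) 2 ∧
      2 * y (j + 3) 4 + y (j + 4) 2 ≤ 2 * y (j + 3) 3 ∧
      2 * y (j + 1) 4 + y (j + 2) 2 ≤ 2 * y (j + 1) 3 + y (j + 2) 1 ∧
      2 * y (j + 3) 3 + y (j + 4) 1 ≤ 2 * y (j + 2) 4 + y (j + 3) 2) :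
    (∀ j i : ℕ, 0 ≤ y j i) ∧
    (∀ m : ℕ, 7 ≤ m → ∀ i : ℕ, 1 ≤ i → i ≤ 4 → y m i = 0) :=
  typeF4_nonneg_and_vanishing_general y hconv hSigma
end
end
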